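/- Let G be a finite simple graph with no isolated vertices and let k be a positive integer. For every nonzero real number γ, the multiplicity of γ as an eigenvalue of the Randić matrix R(S(G)_k) equals the multiplicity of γ as an eigenvalue of the Randić matrix R(S(G)). -/

import Mathlib

open Matrix

noncomputable section

/-- The multiplicity of `μ` as an eigenvalue of a real matrix `M`:
the dimension of the kernel of `M - μ·Id`. -/
def eigMult {n : Type} [Fintype n] [DecidableEq n] (M : Matrix n n ℝ) (μ : ℝ) : ℕ :=
  Module.finrank ℝ (LinearMap.ker (Matrix.toLin' (M - μ • (1 : Matrix n n ℝ))))

/-- The energy of a real symmetric matrix: the sum of the absolute values of its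
eigenvalues, counted with multiplicity. -/
def matEnergy {n : Type} [Fintype n] [DecidableEq n] (M : Matrix n n ℝ) : ℝ :=
  if h : M.IsHermitian then ∑ i, |h.eigenvalues i| else 0

/-- The incidence matrix of a graph, rows indexed by vertices, columns by edges. -/
def incid {V : Type} [DecidableEq V] (G : SimpleGraph V) : Matrix V G.edgeSet ℝ :=
  fun v e => if v ∈ (e : Sym2 V) then 1 else 0

/-- Adjacency matrix of the subdivision graph `S(G)`. -/
def AS {V : Type} [DecidableEq V] (G : SimpleGraph V) :
    Matrix (V ⊕ G.edgeSet) (V ⊕ G.edgeSet) ℝ :=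
  Matrix.fromBlocks 0 (incid G) (incid G)ᵀ 0

/-- Adjacency matrix of `S(G)_k`. -/
def ASk {V : Type} [DecidableEq V] (G : SimpleGraph V) (k : ℕ) :
    Matrix (V ⊕ (Fin k × G.edgeSet)) (V ⊕ (Fin k × G.edgeSet)) ℝ :=
  fun x y => match x, y with
    | Sum.inl v, Sum.inr (_, e) => if v ∈ (e : Sym2 V) then 1 else 0
    | Sum.inr (_, e), Sum.inl v => if v ∈ (e : Sym2 V) then 1 else 0
    | _, _ => 0

/-- Adjacency matrix of `S(G)_t^n`. -/
def AStn {V : Type} [DecidableEq V] (G : SimpleGraph V) (n t : ℕ) :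
    Matrix ((Fin (n + 1) × V) ⊕ (Fin (t + 1) × G.edgeSet))
           ((Fin (n + 1) × V) ⊕ (Fin (t + 1) × G.edgeSet)) ℝ :=
  fun x y => match x, y with
    | Sum.inl (_, v), Sum.inr (_, e) => if v ∈ (e : Sym2 V) then 1 else 0
    | Sum.inr (_, e), Sum.inl (_, v) => if v ∈ (e : Sym2 V) then 1 else 0
    | _, _ => 0

/-- The subdivision graph `S(G)` as a simple graph. -/
def SGGraph {V : Type} (G : SimpleGraph V) : SimpleGraph (V ⊕ G.edgeSet) where
  Adj x y :=
    (∃ (v : V) (e : G.edgeSet), x = Sum.inl v ∧ y = Sum.inr e ∧ v ∈ (e : Sym2 V)) ∨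
    (∃ (v : V) (e : G.edgeSet), x = Sum.inr e ∧ y = Sum.inl v ∧ v ∈ (e : Sym2 V))
  symm := by
    constructor
    rintro x y (⟨v, e, rfl, rfl, h⟩ | ⟨v, e, rfl, rfl, h⟩)
    · exact Or.inr ⟨v, e, rfl, rfl, h⟩
    · exact Or.inl ⟨v, e, rfl, rfl, h⟩
  loopless := by
    constructor
    rintro x (⟨v, e, h1, h2, _⟩ | ⟨v, e, h1, h2, _⟩) <;> subst h1 <;> simp_all

/-- The graph `S(G)_k`. -/
def SGkGraph {V : Type} (G : SimpleGraph V) (k : ℕ) :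
    SimpleGraph (V ⊕ (Fin k × G.edgeSet)) where
  Adj x y :=
    (∃ (v : V) (ie : Fin k × G.edgeSet),
        x = Sum.inl v ∧ y = Sum.inr ie ∧ v ∈ (ie.2 : Sym2 V)) ∨
    (∃ (v : V) (ie : Fin k × G.edgeSet),
        x = Sum.inr ie ∧ y = Sum.inl v ∧ v ∈ (ie.2 : Sym2 V))
  symm := by
    constructor
    rintro x y (⟨v, ie, rfl, rfl, h⟩ | ⟨v, ie, rfl, rfl, h⟩)
    · exact Or.inr ⟨v, ie, rfl, rfl, h⟩
    · exact Or.inl ⟨v, ie, rfl, rfl, h⟩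
  loopless := by
    constructor
    rintro x (⟨v, ie, h1, h2, _⟩ | ⟨v, ie, h1, h2, _⟩) <;> subst h1 <;> simp_all

/-- The graph `S(G)_t^n`. -/
def SGtnGraph {V : Type} (G : SimpleGraph V) (n t : ℕ) :
    SimpleGraph ((Fin (n + 1) × V) ⊕ (Fin (t + 1) × G.edgeSet)) where
  Adj x y :=
    (∃ (iv : Fin (n + 1) × V) (je : Fin (t + 1) × G.edgeSet),
        x = Sum.inl iv ∧ y = Sum.inr je ∧ iv.2 ∈ (je.2 : Sym2 V)) ∨
    (∃ (iv : Fin (n + 1) × V) (je : Fin (t + 1) × G.edgeSet),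
        x = Sum.inr je ∧ y = Sum.inl iv ∧ iv.2 ∈ (je.2 : Sym2 V))
  symm := by
    constructor
    rintro x y (⟨iv, je, rfl, rfl, h⟩ | ⟨iv, je, rfl, rfl, h⟩)
    · exact Or.inr ⟨iv, je, rfl, rfl, h⟩
    · exact Or.inl ⟨iv, je, rfl, rfl, h⟩
  loopless := by
    constructor
    rintro x (⟨iv, je, h1, h2, _⟩ | ⟨iv, je, h1, h2, _⟩) <;> subst h1 <;> simp_all

open scoped Classical in
/-- The Randić matrix of a graph: entry `1/√(deg u · deg v)` when `u ~ v`, else `0`. -/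
def randicMatrix {W : Type} (H : SimpleGraph W) : Matrix W W ℝ :=
  fun u v =>
    if H.Adj u v then
      1 / Real.sqrt ((Nat.card (H.neighborSet u) * Nat.card (H.neighborSet v) : ℕ) : ℝ)
    else 0

/-- `H` has no isolated vertices. -/
def NoIsolated {W : Type} (H : SimpleGraph W) : Prop := ∀ v, ∃ u, H.Adj v u

/-- The matrix `B` used in the construction of `F₁^m(G)`: all entries `1`
except `B(1,1) = 0` and `B(i, m+1-i) = 0` for `2 ≤ i ≤ m-1` (1-based indexing). -/
def Bmat (m : ℕ) : Matrix (Fin m) (Fin m) ℝ :=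
  fun i j =>
    if (i.val = 0 ∧ j.val = 0) ∨ (i.val ≠ 0 ∧ j.val ≠ 0 ∧ i.val + j.val = m - 1) then 0 else 1

lemma Bmat_symm (m : ℕ) (i j : Fin m) : Bmat m i j = Bmat m j i := by
  unfold Bmat
  by_cases h : (i.val = 0 ∧ j.val = 0) ∨ (i.val ≠ 0 ∧ j.val ≠ 0 ∧ i.val + j.val = m - 1)
  · rw [if_pos h, if_pos (by omega)]
  · rw [if_neg h, if_neg (by omega)]

/-- The graph `F₁^m(G)`: `(i,u) ~ (j,v)` iff `B(i,j) = 1` and `u ~ v` in `G`. -/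
def F1Graph {V : Type} (m : ℕ) (G : SimpleGraph V) : SimpleGraph (Fin m × V) where
  Adj x y := Bmat m x.1 y.1 = 1 ∧ G.Adj x.2 y.2
  symm := by
    constructor
    rintro x y ⟨hb, ha⟩
    refine ⟨?_, ha.symm⟩
    rw [Bmat_symm]; exact hb
  loopless := ⟨fun x h => @Std.Irrefl.irrefl _ _ G.loopless x.2 h.2⟩

/-- The matrix `H` used in the construction of `F₂^m(G)`: all entries `1`
except `H(i,i) = 0` for `2 ≤ i ≤ m` (1-based indexing). -/
def HmatF2 (m : ℕ) : Matrix (Fin m) (Fin m) ℝ :=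
  fun i j => if i.val = j.val ∧ i.val ≠ 0 then 0 else 1

lemma HmatF2_symm (m : ℕ) (i j : Fin m) : HmatF2 m i j = HmatF2 m j i := by
  unfold HmatF2
  by_cases h : i.val = j.val ∧ i.val ≠ 0
  · rw [if_pos h, if_pos (by omega)]
  · rw [if_neg h, if_neg (by omega)]

/-- The graph `F₂^m(G)`: `(i,u) ~ (j,v)` iff `H(i,j) = 1` and `u ~ v` in `G`. -/
def F2Graph {V : Type} (m : ℕ) (G : SimpleGraph V) : SimpleGraph (Fin m × V) where
  Adj x y := HmatF2 m x.1 y.1 = 1 ∧ G.Adj x.2 y.2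
  symm := by
    constructor
    rintro x y ⟨hb, ha⟩
    refine ⟨?_, ha.symm⟩
    rw [HmatF2_symm]; exact hb
  loopless := ⟨fun x h => @Std.Irrefl.irrefl _ _ G.loopless x.2 h.2⟩

/-- The tensor (Kronecker) product of simple graphs. -/
def tensorGraph {W U : Type} (H : SimpleGraph W) (G : SimpleGraph U) :
    SimpleGraph (W × U) where
  Adj x y := H.Adj x.1 y.1 ∧ G.Adj x.2 y.2
  symm := ⟨fun _ _ h => ⟨h.1.symm, h.2.symm⟩⟩
  loopless := ⟨fun x h => @Std.Irrefl.irrefl _ _ H.loopless x.1 h.1⟩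

section Aux
variable {V : Type} {G : SimpleGraph V}

lemma SGk_adj_inl_inr {k : ℕ} (v : V) (ie : Fin k × G.edgeSet) :
    (SGkGraph G k).Adj (Sum.inl v) (Sum.inr ie) ↔ v ∈ (ie.2 : Sym2 V) := by
  constructor
  · rintro (⟨v', ie', h1, h2, h⟩ | ⟨v', ie', h1, h2, h⟩) <;> simp_all
  · intro h; exact Or.inl ⟨v, ie, rfl, rfl, h⟩

lemma SGk_adj_inl_inl {k : ℕ} (v v' : V) :
    ¬ (SGkGraph G k).Adj (Sum.inl v) (Sum.inl v') := by
  rintro (⟨_, _, h1, h2, _⟩ | ⟨_, _, h1, h2, _⟩) <;> simp_all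

lemma SGk_adj_inr_inr {k : ℕ} (ie ie' : Fin k × G.edgeSet) :
    ¬ (SGkGraph G k).Adj (Sum.inr ie) (Sum.inr ie') := by
  rintro (⟨_, _, h1, h2, _⟩ | ⟨_, _, h1, h2, _⟩) <;> simp_all

lemma SG_adj_inl_inr (v : V) (e : G.edgeSet) :
    (SGGraph G).Adj (Sum.inl v) (Sum.inr e) ↔ v ∈ (e : Sym2 V) := by
  constructor
  · rintro (⟨v', e', h1, h2, h⟩ | ⟨v', e', h1, h2, h⟩) <;> simp_all
  · intro h; exact Or.inl ⟨v, e, rfl, rfl, h⟩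

lemma SG_adj_inl_inl (v v' : V) :
    ¬ (SGGraph G).Adj (Sum.inl v) (Sum.inl v') := by
  rintro (⟨_, _, h1, h2, _⟩ | ⟨_, _, h1, h2, _⟩) <;> simp_all

lemma SG_adj_inr_inr (e e' : G.edgeSet) :
    ¬ (SGGraph G).Adj (Sum.inr e) (Sum.inr e') := by
  rintro (⟨_, _, h1, h2, _⟩ | ⟨_, _, h1, h2, _⟩) <;> simp_all

lemma SGk_nb_inl {k : ℕ} (v : V) :
    (SGkGraph G k).neighborSet (Sum.inl v)
      = Sum.inr '' {ie : Fin k × G.edgeSet | v ∈ (ie.2 : Sym2 V)} := by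
  ext x
  cases x with
  | inl w => simp [SimpleGraph.neighborSet, SGk_adj_inl_inl]
  | inr ie => simp [SimpleGraph.neighborSet, SGk_adj_inl_inr]

lemma SGk_nb_inr {k : ℕ} (ie : Fin k × G.edgeSet) :
    (SGkGraph G k).neighborSet (Sum.inr ie)
      = Sum.inl '' {v : V | v ∈ (ie.2 : Sym2 V)} := by
  ext x
  cases x with
  | inl w =>
    simp only [SimpleGraph.mem_neighborSet]
    rw [(SGkGraph G k).adj_comm]
    simp [SGk_adj_inl_inr]
  | inr ie' => simp [SimpleGraph.neighborSet, SGk_adj_inr_inr]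

lemma SG_nb_inl (v : V) :
    (SGGraph G).neighborSet (Sum.inl v)
      = Sum.inr '' {e : G.edgeSet | v ∈ (e : Sym2 V)} := by
  ext x
  cases x with
  | inl w => simp [SimpleGraph.neighborSet, SG_adj_inl_inl]
  | inr e => simp [SimpleGraph.neighborSet, SG_adj_inl_inr]

lemma SG_nb_inr (e : G.edgeSet) :
    (SGGraph G).neighborSet (Sum.inr e)
      = Sum.inl '' {v : V | v ∈ (e : Sym2 V)} := by
  ext x
  cases x with
  | inl w =>
    simp only [SimpleGraph.mem_neighborSet]
    rw [(SGGraph G).adj_comm]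
    simp [SG_adj_inl_inr]
  | inr e' => simp [SimpleGraph.neighborSet, SG_adj_inr_inr]

end Aux
section Aux2
variable {V : Type} {G : SimpleGraph V}

lemma card_SGk_nb_inl {k : ℕ} (v : V) :
    Nat.card ((SGkGraph G k).neighborSet (Sum.inl v))
      = k * Nat.card ((SGGraph G).neighborSet (Sum.inl v)) := by
  rw [SGk_nb_inl, SG_nb_inl, Nat.card_image_of_injective Sum.inr_injective,
    Nat.card_image_of_injective Sum.inr_injective]
  have e : {ie : Fin k × G.edgeSet | v ∈ (ie.2 : Sym2 V)}
      ≃ Fin k × {e : G.edgeSet | v ∈ (e : Sym2 V)} :=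
    { toFun := fun x => (x.1.1, ⟨x.1.2, x.2⟩)
      invFun := fun y => ⟨(y.1, y.2.1), y.2.2⟩
      left_inv := fun _ => rfl
      right_inv := fun _ => rfl }
  rw [Nat.card_congr e, Nat.card_prod, Nat.card_eq_fintype_card, Fintype.card_fin]

lemma card_SGk_nb_inr {k : ℕ} (ie : Fin k × G.edgeSet) :
    Nat.card ((SGkGraph G k).neighborSet (Sum.inr ie))
      = Nat.card ((SGGraph G).neighborSet (Sum.inr ie.2)) := by
  rw [SGk_nb_inr, SG_nb_inr, Nat.card_image_of_injective Sum.inl_injective,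
    Nat.card_image_of_injective Sum.inl_injective]

open scoped Classical in
lemma randic_SGk_inl_inr {k : ℕ} (v : V) (ie : Fin k × G.edgeSet) :
    randicMatrix (SGkGraph G k) (Sum.inl v) (Sum.inr ie)
      = (Real.sqrt k)⁻¹ * randicMatrix (SGGraph G) (Sum.inl v) (Sum.inr ie.2) := by
  classical
  unfold randicMatrix
  by_cases h : v ∈ (ie.2 : Sym2 V)
  · rw [if_pos ((SGk_adj_inl_inr v ie).2 h), if_pos ((SG_adj_inl_inr v ie.2).2 h)]
    rw [card_SGk_nb_inl, card_SGk_nb_inr]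
    push_cast
    rw [mul_assoc, Real.sqrt_mul (Nat.cast_nonneg k)]
    rw [one_div, one_div, mul_inv]
  · rw [if_neg (fun hh => h ((SGk_adj_inl_inr v ie).1 hh)),
      if_neg (fun hh => h ((SG_adj_inl_inr v ie.2).1 hh)), mul_zero]

end Aux2
section Aux3
variable {V : Type} {G : SimpleGraph V}

lemma randic_symm {W : Type} (H : SimpleGraph W) (u v : W) :
    randicMatrix H u v = randicMatrix H v u := by
  classical
  unfold randicMatrix
  by_cases h : H.Adj u v
  · rw [if_pos h, if_pos h.symm, Nat.mul_comm]
  · rw [if_neg h, if_neg (fun hh => h hh.symm)]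

open scoped Classical in
lemma randic_SGk_inr_inl {k : ℕ} (v : V) (ie : Fin k × G.edgeSet) :
    randicMatrix (SGkGraph G k) (Sum.inr ie) (Sum.inl v)
      = (Real.sqrt k)⁻¹ * randicMatrix (SGGraph G) (Sum.inr ie.2) (Sum.inl v) := by
  rw [randic_symm, randic_SGk_inl_inr, randic_symm (SGGraph G)]

open scoped Classical in
lemma randic_SG_inl_inl (v v' : V) :
    randicMatrix (SGGraph G) (Sum.inl v) (Sum.inl v') = 0 := by
  unfold randicMatrix; rw [if_neg (SG_adj_inl_inl v v')]

open scoped Classical in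
lemma randic_SG_inr_inr (e e' : G.edgeSet) :
    randicMatrix (SGGraph G) (Sum.inr e) (Sum.inr e') = 0 := by
  unfold randicMatrix; rw [if_neg (SG_adj_inr_inr e e')]

open scoped Classical in
lemma randic_SGk_inl_inl {k : ℕ} (v v' : V) :
    randicMatrix (SGkGraph G k) (Sum.inl v) (Sum.inl v') = 0 := by
  unfold randicMatrix; rw [if_neg (SGk_adj_inl_inl v v')]

open scoped Classical in
lemma randic_SGk_inr_inr {k : ℕ} (ie ie' : Fin k × G.edgeSet) :
    randicMatrix (SGkGraph G k) (Sum.inr ie) (Sum.inr ie') = 0 := by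
  unfold randicMatrix; rw [if_neg (SGk_adj_inr_inr ie ie')]

variable [Fintype V] [Fintype G.edgeSet]

lemma rowsum_inl (g : V ⊕ G.edgeSet → ℝ) (v : V) :
    ∑ y, randicMatrix (SGGraph G) (Sum.inl v) y * g y
      = ∑ e, randicMatrix (SGGraph G) (Sum.inl v) (Sum.inr e) * g (Sum.inr e) := by
  rw [Fintype.sum_sum_type]
  simp [randic_SG_inl_inl]

lemma rowsum_inr (g : V ⊕ G.edgeSet → ℝ) (e : G.edgeSet) :
    ∑ y, randicMatrix (SGGraph G) (Sum.inr e) y * g y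
      = ∑ v, randicMatrix (SGGraph G) (Sum.inr e) (Sum.inl v) * g (Sum.inl v) := by
  rw [Fintype.sum_sum_type]
  simp [randic_SG_inr_inr]

lemma rowsum_k_inl {k : ℕ} (f : V ⊕ (Fin k × G.edgeSet) → ℝ) (v : V) :
    ∑ y, randicMatrix (SGkGraph G k) (Sum.inl v) y * f y
      = (Real.sqrt k)⁻¹ * ∑ i : Fin k, ∑ e,
          randicMatrix (SGGraph G) (Sum.inl v) (Sum.inr e) * f (Sum.inr (i, e)) := by
  rw [Fintype.sum_sum_type]
  simp only [randic_SGk_inl_inl, zero_mul, Finset.sum_const_zero, zero_add,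
    Fintype.sum_prod_type, Finset.mul_sum]
  refine Finset.sum_congr rfl fun i _ => Finset.sum_congr rfl fun e _ => ?_
  rw [randic_SGk_inl_inr]
  ring

lemma rowsum_k_inr {k : ℕ} (f : V ⊕ (Fin k × G.edgeSet) → ℝ) (ie : Fin k × G.edgeSet) :
    ∑ y, randicMatrix (SGkGraph G k) (Sum.inr ie) y * f y
      = (Real.sqrt k)⁻¹ * ∑ v,
          randicMatrix (SGGraph G) (Sum.inr ie.2) (Sum.inl v) * f (Sum.inl v) := by
  rw [Fintype.sum_sum_type]
  simp only [randic_SGk_inr_inr, zero_mul, Finset.sum_const_zero, add_zero, Finset.mul_sum]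
  refine Finset.sum_congr rfl fun w _ => ?_
  rw [randic_SGk_inr_inl]
  ring

lemma mem_ker_iff {n : Type} [Fintype n] [DecidableEq n] (M : Matrix n n ℝ) (γ : ℝ)
    (f : n → ℝ) :
    f ∈ LinearMap.ker (Matrix.toLin' (M - γ • (1 : Matrix n n ℝ)))
      ↔ ∀ x, ∑ y, M x y * f y = γ * f x := by
  rw [LinearMap.mem_ker, Matrix.toLin'_apply, Matrix.sub_mulVec,
    Matrix.smul_mulVec, Matrix.one_mulVec, sub_eq_zero, funext_iff]
  refine forall_congr' fun x => ?_
  simp [Matrix.mulVec, dotProduct, eq_comm]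

end Aux3

/-- for every nonzero real `γ`, the multiplicity of `γ` as an eigenvalue of the
Randić matrix `R(S(G)_k)` equals its multiplicity as an eigenvalue of `R(S(G))`. -/
theorem stmt_4 (V : Type) [Fintype V] [DecidableEq V] (G : SimpleGraph V) [DecidableRel G.Adj]
    (hiso : NoIsolated G) (k : ℕ) (hk : 0 < k) :
    ∀ γ : ℝ, γ ≠ 0 →
      eigMult (randicMatrix (SGkGraph G k)) γ = eigMult (randicMatrix (SGGraph G)) γ := by
  intro γ hγ
  classical
  set c : ℝ := Real.sqrt k with hcdef
  have hc0 : (0 : ℝ) < c := Real.sqrt_pos.2 (by exact_mod_cast hk)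
  have hc : c ≠ 0 := ne_of_gt hc0
  have hc2 : c * c = (k : ℝ) := Real.mul_self_sqrt (Nat.cast_nonneg k)
  set R := randicMatrix (SGGraph G) with hR
  set Rk := randicMatrix (SGkGraph G k) with hRk
  let i₀ : Fin k := ⟨0, hk⟩
  let Φ : (V ⊕ (Fin k × G.edgeSet) → ℝ) →ₗ[ℝ] (V ⊕ G.edgeSet → ℝ) :=
    { toFun := fun f => Sum.elim (fun v => f (Sum.inl v)) (fun e => c * f (Sum.inr (i₀, e)))
      map_add' := by intro f g; funext x; cases x <;> simp [mul_add]
      map_smul' := by intro a f; funext x; cases x <;> simp [mul_left_comm] }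
  let Ψ : (V ⊕ G.edgeSet → ℝ) →ₗ[ℝ] (V ⊕ (Fin k × G.edgeSet) → ℝ) :=
    { toFun := fun g => Sum.elim (fun v => g (Sum.inl v)) (fun ie => c⁻¹ * g (Sum.inr ie.2))
      map_add' := by intro f g; funext x; cases x <;> simp [mul_add]
      map_smul' := by intro a f; funext x; cases x <;> simp [mul_left_comm] }
  have hΦinl : ∀ f v, Φ f (Sum.inl v) = f (Sum.inl v) := fun f v => rfl
  have hΦinr : ∀ f e, Φ f (Sum.inr e) = c * f (Sum.inr (i₀, e)) := fun f e => rfl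
  have hΨinl : ∀ g v, Ψ g (Sum.inl v) = g (Sum.inl v) := fun g v => rfl
  have hΨinr : ∀ g ie, Ψ g (Sum.inr ie) = c⁻¹ * g (Sum.inr ie.2) := fun g ie => rfl
  have hconst : ∀ f ∈ LinearMap.ker (Matrix.toLin' (Rk - γ • 1)),
      ∀ (i : Fin k) (e : G.edgeSet), f (Sum.inr (i, e)) = f (Sum.inr (i₀, e)) := by
    intro f hf i e
    rw [mem_ker_iff] at hf
    have h1 := hf (Sum.inr (i, e))
    have h2 := hf (Sum.inr (i₀, e))
    rw [hRk, rowsum_k_inr] at h1 h2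
    exact mul_left_cancel₀ hγ (h1.symm.trans h2)
  have hΦmem : ∀ f ∈ LinearMap.ker (Matrix.toLin' (Rk - γ • 1)),
      Φ f ∈ LinearMap.ker (Matrix.toLin' (R - γ • 1)) := by
    intro f hf
    have hfc := hconst f hf
    rw [mem_ker_iff] at hf ⊢
    intro x
    cases x with
    | inl v =>
      have h1 := hf (Sum.inl v)
      rw [hRk, rowsum_k_inl] at h1
      have h2 : ∑ i : Fin k, ∑ e, R (Sum.inl v) (Sum.inr e) * f (Sum.inr (i, e))
          = (k : ℝ) * ∑ e, R (Sum.inl v) (Sum.inr e) * f (Sum.inr (i₀, e)) := by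
        rw [Finset.sum_congr rfl (fun i _ => Finset.sum_congr rfl fun e _ => by rw [hfc i e])]
        rw [Finset.sum_const, Finset.card_univ, Fintype.card_fin, nsmul_eq_mul]
      rw [h2] at h1
      rw [← hcdef] at h1
      rw [hR, rowsum_inl, ← hR]
      have h3 : ∑ e, R (Sum.inl v) (Sum.inr e) * Φ f (Sum.inr e)
          = c * ∑ e, R (Sum.inl v) (Sum.inr e) * f (Sum.inr (i₀, e)) := by
        rw [Finset.mul_sum]
        exact Finset.sum_congr rfl fun e _ => by rw [hΦinr]; ring
      rw [h3, hΦinl]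
      rw [← h1, ← hc2]
      field_simp
    | inr e =>
      have h1 := hf (Sum.inr (i₀, e))
      rw [hRk, rowsum_k_inr] at h1
      rw [hR, rowsum_inr, ← hR]
      have h3 : ∑ v, R (Sum.inr e) (Sum.inl v) * Φ f (Sum.inl v)
          = ∑ v, R (Sum.inr e) (Sum.inl v) * f (Sum.inl v) := rfl
      rw [h3, hΦinr]
      have h4 : c⁻¹ * ∑ v, R (Sum.inr e) (Sum.inl v) * f (Sum.inl v)
          = γ * f (Sum.inr (i₀, e)) := h1
      calc ∑ v, R (Sum.inr e) (Sum.inl v) * f (Sum.inl v)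
          = c * (c⁻¹ * ∑ v, R (Sum.inr e) (Sum.inl v) * f (Sum.inl v)) :=
            (mul_inv_cancel_left₀ hc _).symm
        _ = c * (γ * f (Sum.inr (i₀, e))) := by rw [h4]
        _ = γ * (c * f (Sum.inr (i₀, e))) := by ring
  have hΨmem : ∀ g ∈ LinearMap.ker (Matrix.toLin' (R - γ • 1)),
      Ψ g ∈ LinearMap.ker (Matrix.toLin' (Rk - γ • 1)) := by
    intro g hg
    rw [mem_ker_iff] at hg ⊢
    intro x
    cases x with
    | inl v =>
      have h1 := hg (Sum.inl v)
      rw [hR, rowsum_inl, ← hR] at h1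
      rw [hRk, rowsum_k_inl, ← hR]
      have h2 : ∑ i : Fin k, ∑ e, R (Sum.inl v) (Sum.inr e) * Ψ g (Sum.inr (i, e))
          = (k : ℝ) * (c⁻¹ * ∑ e, R (Sum.inl v) (Sum.inr e) * g (Sum.inr e)) := by
        have inner : ∀ i : Fin k, ∑ e, R (Sum.inl v) (Sum.inr e) * Ψ g (Sum.inr (i, e))
            = c⁻¹ * ∑ e, R (Sum.inl v) (Sum.inr e) * g (Sum.inr e) := by
          intro i
          rw [Finset.mul_sum]
          exact Finset.sum_congr rfl fun e _ => by rw [hΨinr]; ring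
        rw [Finset.sum_congr rfl (fun i _ => inner i)]
        rw [Finset.sum_const, Finset.card_univ, Fintype.card_fin, nsmul_eq_mul]
      rw [h2, h1, hΨinl]
      rw [← hcdef]
      rw [← hc2]
      field_simp
    | inr ie =>
      have h1 := hg (Sum.inr ie.2)
      rw [hR, rowsum_inr, ← hR] at h1
      rw [hRk, rowsum_k_inr, ← hR]
      have h3 : ∑ v, R (Sum.inr ie.2) (Sum.inl v) * Ψ g (Sum.inl v)
          = ∑ v, R (Sum.inr ie.2) (Sum.inl v) * g (Sum.inl v) := rfl
      rw [h3, h1, hΨinr]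
      ring
  have hΨΦ : ∀ f ∈ LinearMap.ker (Matrix.toLin' (Rk - γ • 1)), Ψ (Φ f) = f := by
    intro f hf
    funext x
    cases x with
    | inl v => rw [hΨinl, hΦinl]
    | inr ie =>
      obtain ⟨i, e⟩ := ie
      rw [hΨinr, hΦinr, inv_mul_cancel_left₀ hc, hconst f hf i e]
  have hΦΨ : ∀ g, Φ (Ψ g) = g := by
    intro g
    funext x
    cases x with
    | inl v => rw [hΦinl, hΨinl]
    | inr e => rw [hΦinr, hΨinr, mul_inv_cancel_left₀ hc]
  have eqv : LinearMap.ker (Matrix.toLin' (Rk - γ • 1)) ≃ₗ[ℝ]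
      LinearMap.ker (Matrix.toLin' (R - γ • 1)) :=
    { toFun := fun f => ⟨Φ f, hΦmem f f.2⟩
      map_add' := fun a b => Subtype.ext (Φ.map_add a b)
      map_smul' := fun r a => Subtype.ext (Φ.map_smul r a)
      invFun := fun g => ⟨Ψ g, hΨmem g g.2⟩
      left_inv := fun f => Subtype.ext (hΨΦ f f.2)
      right_inv := fun g => Subtype.ext (hΦΨ g) }
  unfold eigMult
  exact eqv.finrank_eq

end
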